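/- Assume Martin's Axiom. Let 𝒞 be a concept class of Borel subsets of a standard Borel space Ω, and suppose every countable subclass of 𝒞 is uniform Glivenko–Cantelli with respect to a family 𝒫 of probability measures, with a common sample complexity bound s(ε, δ). Then every subclass 𝒞' ⊆ 𝒞 of cardinality strictly less than 2^ℵ₀ is uniform Glivenko–Cantelli with respect to 𝒫 with the same sample complexity bound s(ε, δ). -/

import Mathlib

/-- Martin's Axiom: no nonempty compact Hausdorff space with the countable chain
condition is the union of strictly fewer than continuum nowhere dense subsets. -/
def MartinsAxiom : Prop :=
  ∀ (X : Type) [TopologicalSpace X], Nonempty X → CompactSpace X → T2Space X →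
    (∀ s : Set (Set X), (∀ u ∈ s, IsOpen u) → s.PairwiseDisjoint id → s.Countable) →
    ∀ (ι : Type), Cardinal.mk ι < Cardinal.continuum → ∀ f : ι → Set X,
      (∀ i, IsNowhereDense (f i)) → (⋃ i, f i) ≠ Set.univ

open MeasureTheory Set

/-- Empirical measure of the set `C` on a sample `σ` of size `n`. -/
noncomputable def empMeas {Ω : Type*} (n : ℕ) (σ : Fin n → Ω) (C : Set Ω) : ℝ :=
  (Nat.card {i : Fin n // σ i ∈ C} : ℝ) / n

/-- `n₀` is a uniform Glivenko–Cantelli sample-complexity bound for the class `𝒞`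
at accuracy `ε` and confidence `δ`, with respect to the family `P` of measures
(outer probabilities are used for the possibly non-measurable event). -/
def GoodBound {Ω : Type*} [MeasurableSpace Ω] (P : Set (Measure Ω)) (ε δ : ℝ)
    (𝒞 : Set (Set Ω)) (n₀ : ℕ) : Prop :=
  ∀ n : ℕ, n₀ ≤ n → ∀ μ ∈ P,
    (Measure.pi fun _ : Fin n => μ)
      {σ : Fin n → Ω | ε ≤ ⨆ C ∈ 𝒞, |empMeas n σ C - (μ C).toReal|} ≤ ENNReal.ofReal δ

/-! Under Martin's axiom a finite Borel measure `ν` on a standard Borel space is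
`𝔠`-additive on null sets. Fix `e > 0` and apply MA to the compact space of centered
selections of open sets of measure `< e` (every finite subselection has union of measure `< e`).
It satisfies the countable chain condition: a countable measure-dense family splits the small
sets into countably many linked classes, and a Δ-system-type argument finds two compatible
cylinders among uncountably many. A selection avoiding the fewer than `𝔠` nowhere dense sets
"selects no open set covering `N i`" covers every null set `N i`, and by Lindelöf its union has
measure `≤ e`.

For the theorem, with `u k ↑ ε`, the event `ε ≤ ⨆ C ∈ 𝒞', |μₙ C - μ C|` is `⋂ₖ ⋃_{C ∈ 𝒞'} Aₖ C`
for the measurable sets `Aₖ C = {u k < |μₙ C - μ C|}`. Some countable subunion contains every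
`Aₖ C` up to a null set, hence by `𝔠`-additivity all of `⋃_{C ∈ 𝒞'} Aₖ C`; so the event for `𝒞'`
is almost contained in the event for a countable subclass of `𝒞`. -/

open Filter Topology Cardinal
open scoped ENNReal

section Combinatorics

variable {ι K β : Type*}

theorem Set.exists_not_countable_inter_preimage [Countable β] {s : Set ι} (hs : ¬ s.Countable)
    (f : ι → β) : ∃ b, ¬ (s ∩ f ⁻¹' {b}).Countable := by
  by_contra! h
  refine hs ((countable_iUnion h).mono fun i hi => ?_)
  exact mem_iUnion_of_mem (f i) ⟨hi, rfl⟩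

theorem Set.exists_ne_disjoint_of_countable_mem {s : Set ι} (hs : ¬ s.Countable)
    (T : ι → Finset K) (hT : ∀ a, {i ∈ s | a ∈ T i}.Countable) :
    ∃ i ∈ s, ∃ j ∈ s, i ≠ j ∧ Disjoint (T i) (T j) := by
  obtain ⟨i, hi, -⟩ := not_subset.1 fun h : s ⊆ ∅ => hs (countable_empty.mono h)
  have hmeet : (insert i (⋃ a ∈ T i, {j ∈ s | a ∈ T j})).Countable :=
    ((T i).countable_toSet.biUnion fun a _ => hT a).insert i
  obtain ⟨j, hj, hjt⟩ := not_subset.1 fun h => hs (hmeet.mono h)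
  simp only [mem_insert_iff, mem_iUnion, mem_ofPred_eq, not_or, not_exists, not_and] at hjt
  exact ⟨i, hi, j, hj, Ne.symm hjt.1,
    Finset.disjoint_left.2 fun a ha ha' => hjt.2 a (Finset.mem_coe.2 ha) hj ha'⟩

theorem Set.exists_ne_eqOn_inter_of_card_le [DecidableEq K] [Countable β] {s : Set ι}
    (hs : ¬ s.Countable) (T : ι → Finset K) (f : ι → K → β) (n : ℕ)
    (hT : ∀ i ∈ s, (T i).card ≤ n) :
    ∃ i ∈ s, ∃ j ∈ s, i ≠ j ∧ EqOn (f i) (f j) ↑(T i ∩ T j) := by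
  induction n generalizing s T with
  | zero =>
    obtain ⟨i, hi, j, hj, hij, hd⟩ := exists_ne_disjoint_of_countable_mem hs T fun a =>
      countable_empty.mono fun i hi => by
        simpa [Finset.card_eq_zero.1 (Nat.le_zero.1 (hT i hi.1))] using hi.2
    exact ⟨i, hi, j, hj, hij, by simp [Finset.disjoint_iff_inter_eq_empty.1 hd]⟩
  | succ n ih =>
    by_cases hmem : ∀ a, {i ∈ s | a ∈ T i}.Countable
    · obtain ⟨i, hi, j, hj, hij, hd⟩ := exists_ne_disjoint_of_countable_mem hs T hmem
      exact ⟨i, hi, j, hj, hij, by simp [Finset.disjoint_iff_inter_eq_empty.1 hd]⟩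
    obtain ⟨a, ha⟩ := not_forall.1 hmem
    -- a point shared by uncountably many domains, with the same value: erase it and recurse
    obtain ⟨b, hb⟩ := exists_not_countable_inter_preimage ha fun i => f i a
    obtain ⟨i, ⟨⟨his, hai⟩, hfi⟩, j, ⟨⟨hjs, haj⟩, hfj⟩, hij, heq⟩ :=
      ih hb (fun i => (T i).erase a) fun i hi => by
        rw [Finset.card_erase_of_mem hi.1.2]; exact Nat.sub_le_of_le_add (hT i hi.1.1)
    refine ⟨i, his, j, hjs, hij, fun q hq => ?_⟩
    by_cases hqa : q = a
    · subst hqa; exact hfi.trans hfj.symm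
    · exact heq (by simpa [hqa] using hq)

theorem Set.exists_ne_eqOn_inter [DecidableEq K] [Countable β] {s : Set ι} (hs : ¬ s.Countable)
    (T : ι → Finset K) (f : ι → K → β) :
    ∃ i ∈ s, ∃ j ∈ s, i ≠ j ∧ EqOn (f i) (f j) ↑(T i ∩ T j) := by
  obtain ⟨n, hn⟩ := exists_not_countable_inter_preimage hs fun i => (T i).card
  obtain ⟨i, hi, j, hj, hij, h⟩ := exists_ne_eqOn_inter_of_card_le hn T f n fun i hi => hi.2.le
  exact ⟨i, hi.1, j, hj.1, hij, h⟩

end Combinatorics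

section Supremum

variable {α β : Type*}

theorem Real.lt_biSup_iff_of_nonneg {g : β → ℝ} (hg : BddAbove (range g)) {t : ℝ}
    (ht : 0 ≤ t) (D : Set β) : t < ⨆ b ∈ D, g b ↔ ∃ b ∈ D, t < g b := by
  have hind : ∀ b, (⨆ _ : b ∈ D, g b) = D.indicator g b := fun b => by
    by_cases hb : b ∈ D <;> simp [hb]
  rcases isEmpty_or_nonempty β with hβ | hβ
  · simp [Real.iSup_of_isEmpty, ht.not_gt]
  obtain ⟨M, hM⟩ := hg
  have hbdd : BddAbove (range fun b => D.indicator g b) := ⟨max M 0, by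
    rintro _ ⟨b, rfl⟩
    by_cases hb : b ∈ D <;> simp [hb, le_max_of_le_left (hM (mem_range_self b))]⟩
  simp only [hind, lt_ciSup_iff hbdd]
  refine ⟨fun ⟨b, hb⟩ => ?_, fun ⟨b, hbD, hb⟩ => ⟨b, by simpa [hbD] using hb⟩⟩
  by_cases hbD : b ∈ D
  · exact ⟨b, hbD, by simpa [hbD] using hb⟩
  · exact absurd (by simpa [hbD] using hb) ht.not_gt

theorem setOf_le_biSup_eq_iInter_iUnion {g : α → β → ℝ} (hg : ∀ a, BddAbove (range (g a)))
    {ε : ℝ} {u : ℕ → ℝ} (hu : ∀ k, u k ∈ Ioo 0 ε) (hlim : Tendsto u atTop (𝓝 ε)) (D : Set β) :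
    {a | ε ≤ ⨆ b ∈ D, g a b} = ⋂ k, ⋃ b ∈ D, {a | u k < g a b} := by
  ext a
  simp only [mem_ofPred_eq, mem_iInter, mem_iUnion, exists_prop,
    ← Real.lt_biSup_iff_of_nonneg (hg a) (hu _).1.le]
  exact ⟨fun h k => (hu k).2.trans_le h, fun h => le_of_tendsto' hlim fun k => (h k).le⟩

end Supremum

section EmpiricalMeasure

variable {Ω : Type*} {n : ℕ} {σ : Fin n → Ω} {C : Set Ω}

theorem empMeas_nonneg : 0 ≤ empMeas n σ C := by unfold empMeas; positivity

theorem empMeas_le_one : empMeas n σ C ≤ 1 :=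
  div_le_one_of_le₀ (by simpa using Finite.card_subtype_le fun i => σ i ∈ C) n.cast_nonneg

theorem bddAbove_range_abs_empMeas_sub [MeasurableSpace Ω] (μ : Measure Ω)
    [IsProbabilityMeasure μ] (σ : Fin n → Ω) :
    BddAbove (range fun C => |empMeas n σ C - (μ C).toReal|) :=
  ⟨1, by
    rintro _ ⟨C, rfl⟩
    exact abs_sub_le_of_nonneg_of_le empMeas_nonneg empMeas_le_one ENNReal.toReal_nonneg
      measureReal_le_one⟩

-- `empMeas` factors through the finite set `Fin n → Prop` of membership patterns.
theorem measurable_empMeas [MeasurableSpace Ω] (hC : MeasurableSet C) :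
    Measurable fun σ : Fin n → Ω => empMeas n σ C :=
  (Measurable.of_discrete (f := fun p : Fin n → Prop => (Nat.card {i // p i} : ℝ) / n)).comp
    (measurable_pi_lambda _ fun i => measurableSet_setOfPred.1 (measurable_pi_apply i hC))

end EmpiricalMeasure

section EssentialUnion

variable {α ι : Type*} [MeasurableSpace α]

theorem exists_countable_subset_ae_le_biUnion (μ : Measure α) [IsFiniteMeasure μ] (𝒜 : Set ι)
    {A : ι → Set α} (hA : ∀ i ∈ 𝒜, MeasurableSet (A i)) :
    ∃ D ⊆ 𝒜, D.Countable ∧ ∀ i ∈ 𝒜, A i ≤ᵐ[μ] ⋃ j ∈ D, A j := by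
  set V := (fun D => μ (⋃ j ∈ D, A j)) '' {D : Set ι | D ⊆ 𝒜 ∧ D.Countable}
  have hV : V.Nonempty := ⟨_, ∅, ⟨empty_subset 𝒜, countable_empty⟩, rfl⟩
  obtain ⟨x, -, hlim, hxV⟩ := exists_seq_tendsto_sSup hV (OrderTop.bddAbove V)
  choose D hD hDx using hxV
  set D' := ⋃ k, D k
  have hD' : D' ⊆ 𝒜 ∧ D'.Countable :=
    ⟨iUnion_subset fun k => (hD k).1, countable_iUnion fun k => (hD k).2⟩
  have hmax : ∀ D'' ⊆ 𝒜, D''.Countable → μ (⋃ j ∈ D'', A j) ≤ μ (⋃ j ∈ D', A j) :=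
    fun D'' h𝒜 hc => (le_csSup (OrderTop.bddAbove V) ⟨D'', ⟨h𝒜, hc⟩, rfl⟩).trans <|
      le_of_tendsto' hlim fun k => (hDx k).symm.le.trans <|
        measure_mono (biUnion_subset_biUnion_left (subset_iUnion D k))
  refine ⟨D', hD'.1, hD'.2, fun i hi => ae_le_set.2 ?_⟩
  have hmeas : MeasurableSet (⋃ j ∈ D', A j) := .biUnion hD'.2 fun j hj => hA j (hD'.1 hj)
  rw [measure_sdiff' _ hmeas.nullMeasurableSet (measure_ne_top μ _), tsub_eq_zero_iff_le,
    ← biUnion_insert (t := A)]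
  exact hmax _ (insert_subset hi hD'.1) (hD'.2.insert i)

end EssentialUnion

section LinkedCover

open scoped symmDiff

variable {S : Type*} [MeasurableSpace S]

/-- `U` and `V` lie in a common family when both are within `r` of the same member of a countable
measure-dense family, with `ν U + 2 r < e`. -/
theorem exists_linked_cover (ν : Measure S) [IsFiniteMeasure ν] [IsSeparable ν] (e : ℝ≥0∞) :
    ∃ L : ℕ × ℕ → Set (Set S), (∀ U, MeasurableSet U → ν U < e → ∃ k, U ∈ L k) ∧
      ∀ k, ∀ U ∈ L k, ∀ V ∈ L k, ν (U ∪ V) < e := by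
  obtain ⟨𝒜, h𝒜c, h𝒜⟩ := exists_countable_measureDense (μ := ν)
  obtain ⟨a, rfl⟩ := h𝒜c.exists_eq_range h𝒜.nonempty
  let r : ℕ → ℝ≥0∞ := fun n => ENNReal.ofReal (1 / (n + 1))
  refine ⟨fun k => {U | ν U + 2 * r k.1 < e ∧ ν (U ∆ a k.2) < r k.1}, fun U hU hUe => ?_, ?_⟩
  · have hr : Tendsto (fun n => ν U + 2 * r n) atTop (𝓝 (ν U + 2 * 0)) := by
      refine tendsto_const_nhds.add (ENNReal.Tendsto.const_mul ?_ (Or.inr ENNReal.ofNat_ne_top))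
      simpa [r] using ENNReal.tendsto_ofReal (tendsto_one_div_add_atTop_nhds_zero_nat (𝕜 := ℝ))
    obtain ⟨n, hn⟩ := (hr.eventually (gt_mem_nhds (by simpa using hUe))).exists
    obtain ⟨_, ⟨m, rfl⟩, hm⟩ :=
      h𝒜.approx U hU (measure_ne_top ν U) (1 / (n + 1)) (by positivity)
    exact ⟨(n, m), hn, hm⟩
  · rintro ⟨n, m⟩ U ⟨hU, hUa⟩ V ⟨-, hVa⟩
    calc ν (U ∪ V) ≤ ν (U ∪ (U ∆ a m) ∪ (V ∆ a m)) := measure_mono fun x hx => by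
          by_cases hxU : x ∈ U
          · exact Or.inl (Or.inl hxU)
          by_cases hxa : x ∈ a m
          · exact Or.inl (Or.inr (Or.inr ⟨hxa, hxU⟩))
          · exact Or.inr (Or.inl ⟨hx.resolve_left hxU, hxa⟩)
      _ ≤ ν U + r n + r n := by
          grw [measure_union_le, measure_union_le, hUa.le, hVa.le]
      _ < e := by rwa [add_assoc, ← two_mul]

end LinkedCover

section CenteredFamilies

variable {S K : Type*} [MeasurableSpace S] {ν : Measure S} {e : ℝ≥0∞} {π : K → Set S}

variable (ν e π) in
/-- The space to which Martin's axiom is applied; a point is the indicator of a selection. -/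
def centeredFamilies : Set (K → Bool) :=
  {f | ∀ F : Finset K, (∀ q ∈ F, f q = true) → ν (⋃ q ∈ F, π q) < e}

theorem mem_centeredFamilies_of_forall_mem {g : K → Bool} {A : Finset K}
    (hA : ν (⋃ q ∈ A, π q) < e) (hg : ∀ q, g q = true → q ∈ A) : g ∈ centeredFamilies ν e π :=
  fun _ hF => (measure_mono (biUnion_subset_biUnion_left fun q hq => hg q (hF q hq))).trans_lt hA

theorem isClosed_centeredFamilies : IsClosed (centeredFamilies ν e π) := by
  rw [centeredFamilies, ofPred_forall]
  refine isClosed_iInter fun F => ?_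
  by_cases h : ν (⋃ q ∈ F, π q) < e
  · simp [h]
  · convert isClosed_biUnion_finset (s := F) fun q _ =>
      (isClosed_discrete ({false} : Set Bool)).preimage (continuous_apply q) using 1
    ext f
    simp [h]

theorem compactSpace_centeredFamilies : CompactSpace (centeredFamilies ν e π) :=
  isCompact_iff_compactSpace.mp isClosed_centeredFamilies.isCompact

theorem exists_finset_forall_eqOn_mem {u : Set (centeredFamilies ν e π)} (hu : IsOpen u)
    {f : centeredFamilies ν e π} (hf : f ∈ u) :
    ∃ T : Finset K, ∀ g : centeredFamilies ν e π, EqOn (g : K → Bool) f T → g ∈ u := by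
  obtain ⟨V, hV, rfl⟩ := isOpen_induced_iff.1 hu
  obtain ⟨T, w, hw, hTw⟩ := isOpen_pi_iff.1 hV f.1 hf
  exact ⟨T, fun g hg => hTw fun q hq => hg hq ▸ (hw q hq).2⟩

theorem Set.PairwiseDisjoint.countable_of_isOpen_centeredFamilies [IsFiniteMeasure ν]
    [IsSeparable ν] (hπ : ∀ q, MeasurableSet (π q))
    {s : Set (Set (centeredFamilies ν e π))} (hd : s.PairwiseDisjoint id)
    (hs : ∀ u ∈ s, IsOpen u) : s.Countable := by
  classical
  by_contra hsc
  replace hsc : ¬ (s \ {∅}).Countable := fun h =>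
    hsc ((h.union (countable_singleton ∅)).mono (subset_sdiff_union s {∅}))
  obtain ⟨u₀, hu₀⟩ := not_subset.1 fun h : s \ {∅} ⊆ ∅ => hsc (countable_empty.mono h)
  obtain ⟨f₀, -⟩ := nonempty_iff_ne_empty.2 hu₀.1.2
  have : Nonempty (centeredFamilies ν e π) := ⟨f₀⟩
  have hcyl : ∀ u ∈ s \ {∅}, ∃ f : centeredFamilies ν e π, ∃ T : Finset K,
      ∀ g : centeredFamilies ν e π, EqOn (g : K → Bool) f T → g ∈ u :=
    fun u hu => (nonempty_iff_ne_empty.2 hu.2).elim fun f hf =>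
      ⟨f, exists_finset_forall_eqOn_mem (hs u hu.1) hf⟩
  choose! pt T hT using hcyl
  set F : Set (centeredFamilies ν e π) → Finset K :=
    fun u => (T u).filter fun q => (pt u).1 q = true
  have hF : ∀ u ∈ s \ {∅}, ν (⋃ q ∈ F u, π q) < e :=
    fun u _ => (pt u).2 (F u) fun q hq => (Finset.mem_filter.1 hq).2
  obtain ⟨L, hLcover, hL⟩ := exists_linked_cover ν e
  choose! k hk using fun u hu =>
    hLcover _ (Finset.measurableSet_biUnion (F u) fun q _ => hπ q) (hF u hu)
  obtain ⟨c, hc⟩ := exists_not_countable_inter_preimage hsc k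
  obtain ⟨u, ⟨hu, rfl⟩, v, ⟨hv, hvc⟩, huv, hagree⟩ :=
    exists_ne_eqOn_inter hc T fun u => (pt u).1
  -- the two cylinders are compatible, so they meet in the selection `F u ∪ F v`
  set g : K → Bool := fun q => decide (q ∈ T u) && (pt u).1 q || decide (q ∈ T v) && (pt v).1 q
  have hg : g ∈ centeredFamilies ν e π := by
    refine mem_centeredFamilies_of_forall_mem (A := F u ∪ F v) ?_ fun q => ?_
    · rw [Finset.set_biUnion_union]
      exact hL _ _ (hk u hu) _ (hvc ▸ hk v hv)
    · simp [g, F]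
  have hgu : (⟨g, hg⟩ : centeredFamilies ν e π) ∈ u := hT u hu _ fun q (hq : q ∈ T u) => by
    by_cases hqv : q ∈ T v
    · simp [g, hq, hqv, hagree (Finset.mem_coe.2 (Finset.mem_inter.2 ⟨hq, hqv⟩))]
    · simp [g, hq, hqv]
  have hgv : (⟨g, hg⟩ : centeredFamilies ν e π) ∈ v := hT v hv _ fun q (hq : q ∈ T v) => by
    by_cases hqu : q ∈ T u
    · simp [g, hq, hqu, hagree (Finset.mem_coe.2 (Finset.mem_inter.2 ⟨hqu, hq⟩))]
    · simp [g, hq, hqu]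
  exact disjoint_left.1 (hd hu.1 hv.1 huv) hgu hgv

theorem measure_biUnion_le_of_mem_centeredFamilies [TopologicalSpace S]
    [SecondCountableTopology S] (hπ : ∀ q, IsOpen (π q)) {f : K → Bool}
    (hf : f ∈ centeredFamilies ν e π) : ν (⋃ q ∈ {q | f q = true}, π q) ≤ e := by
  classical
  -- Lindelöf reduces to a countable union, whose measure is the supremum over finite subunions
  obtain ⟨T, hT, hTc, hTU⟩ :=
    TopologicalSpace.isOpen_biUnion_countable {q | f q = true} π fun q _ => hπ q
  have := hTc.to_subtype
  rw [← hTU, biUnion_eq_iUnion, iUnion_eq_iUnion_finset, Directed.measure_iUnion (μ := ν)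
    (s := fun F : Finset T => ⋃ i ∈ F, π i)
    (directed_of_isDirected_le fun F G h => biUnion_subset_biUnion_left h)]
  refine iSup_le fun F => le_of_lt ?_
  convert hf (F.map (Function.Embedding.subtype _)) fun q hq => by
    obtain ⟨⟨q, hqT⟩, -, rfl⟩ := Finset.mem_map.1 hq; exact hT hqT using 2
  simp

end CenteredFamilies

section MartinsAxiom

open TopologicalSpace

variable {S : Type*} [TopologicalSpace S] [MeasurableSpace S] {ν : Measure S} {e : ℝ≥0∞}

/-- Each open set is offered in countably many copies, so that no cylinder constrains all of
them. -/
abbrev centeredOpens (ν : Measure S) (e : ℝ≥0∞) : Set (Opens S × ℕ → Bool) :=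
  centeredFamilies ν e fun q => (q.1 : Set S)

theorem isNowhereDense_setOf_forall_subset_imp_eq_false [ν.OuterRegular] {N : Set S}
    (hN : ν N = 0) :
    IsNowhereDense {f : centeredOpens ν e | ∀ q : Opens S × ℕ, N ⊆ q.1 → f.1 q = false} := by
  classical
  refine (IsClosed.isNowhereDense_iff ?_).2 (eq_empty_iff_forall_notMem.2 fun f hf => ?_)
  · simp only [ofPred_forall]
    exact isClosed_iInter fun q => isClosed_iInter fun _ =>
      isClosed_eq ((continuous_apply q).comp continuous_subtype_val) continuous_const
  obtain ⟨T, hT⟩ := exists_finset_forall_eqOn_mem isOpen_interior hf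
  set F₀ := T.filter fun q => f.1 q = true
  set U₀ := ⋃ q ∈ F₀, (q.1 : Set S)
  have hU₀ : ν U₀ < e := f.2 F₀ fun q hq => (Finset.mem_filter.1 hq).2
  obtain ⟨W, hNW, hWo, hW⟩ :=
    N.exists_isOpen_lt_of_lt (e - ν U₀) (by rw [hN]; exact tsub_pos_of_lt hU₀)
  obtain ⟨m, hm⟩ := Infinite.exists_notMem_finset (T.image Prod.snd)
  set q' : Opens S × ℕ := (⟨U₀ ∪ W, (isOpen_biUnion fun q _ => q.1.isOpen).union hWo⟩, m)
  have hq'T : q' ∉ T := fun h => hm (Finset.mem_image_of_mem _ h)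
  set g : Opens S × ℕ → Bool := fun q => decide (q ∈ insert q' F₀)
  have hg : g ∈ centeredOpens ν e := by
    refine mem_centeredFamilies_of_forall_mem (A := insert q' F₀) ?_ fun q hq => by
      simpa [g] using hq
    rw [Finset.set_biUnion_insert]
    calc ν (U₀ ∪ W ∪ U₀) = ν (U₀ ∪ W) := by rw [union_right_comm, union_self]
      _ ≤ ν U₀ + ν W := measure_union_le _ _
      _ < e := lt_tsub_iff_left.1 hW
  have hgf : EqOn g f.1 T := fun q (hq : q ∈ T) => by
    have : q ≠ q' := fun h => hq'T (h ▸ hq)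
    cases hfq : f.1 q <;> simp [g, F₀, this, hq, hfq]
  have := interior_subset (hT ⟨g, hg⟩ hgf) q' (hNW.trans subset_union_right)
  simp [g] at this

theorem measure_iUnion_null_of_martinsAxiom (hMA : MartinsAxiom) {S : Type} [MeasurableSpace S]
    [StandardBorelSpace S] (ν : Measure S) [IsFiniteMeasure ν] {ι : Type} (hι : #ι < 𝔠)
    {N : ι → Set S} (hN : ∀ i, ν (N i) = 0) : ν (⋃ i, N i) = 0 := by
  let := upgradeStandardBorel S
  refine le_antisymm (ENNReal.le_of_forall_pos_le_add fun e he _ => ?_) zero_le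
  rw [zero_add]
  have hne : Nonempty (centeredOpens ν e) :=
    ⟨⟨fun _ => false, mem_centeredFamilies_of_forall_mem (A := ∅) (by simpa using he) (by simp)⟩⟩
  -- a point outside all the nowhere dense sets selects, for each `i`, an open cover of `N i`
  obtain ⟨f, hf⟩ : ∃ f : centeredOpens ν e,
      ∀ i, ¬ ∀ q : Opens S × ℕ, N i ⊆ q.1 → f.1 q = false := by
    simpa [eq_univ_iff_forall] using hMA _ hne compactSpace_centeredFamilies inferInstance
      (fun _ hs hd =>
        hd.countable_of_isOpen_centeredFamilies (fun q => q.1.isOpen.measurableSet) hs)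
      ι hι _ fun i => isNowhereDense_setOf_forall_subset_imp_eq_false (hN i)
  calc ν (⋃ i, N i) ≤ ν (⋃ q ∈ {q | f.1 q = true}, (q.1 : Set S)) := measure_mono <|
        iUnion_subset fun i => by
          obtain ⟨q, hNq, hq⟩ : ∃ q : Opens S × ℕ, N i ⊆ q.1 ∧ f.1 q = true := by
            simpa using hf i
          exact hNq.trans (subset_biUnion_of_mem (u := fun q : Opens S × ℕ => (q.1 : Set S)) hq)
    _ ≤ e := measure_biUnion_le_of_mem_centeredFamilies (fun q => q.1.isOpen) f.2

theorem cardinalInterFilter_ae_of_martinsAxiom (hMA : MartinsAxiom) {S : Type}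
    [MeasurableSpace S] [StandardBorelSpace S] (ν : Measure S) [IsFiniteMeasure ν] :
    CardinalInterFilter (ae ν) 𝔠 where
  cardinal_sInter_mem 𝒮 h𝒮 h := by
    rw [mem_ae_iff, compl_sInter, sUnion_image, biUnion_eq_iUnion]
    exact measure_iUnion_null_of_martinsAxiom hMA ν h𝒮 fun s => mem_ae_iff.1 (h s s.2)

end MartinsAxiom

/-- under MA, if every countable subclass of a class `𝒞` of Borel sets
in a standard Borel space is uniform Glivenko–Cantelli with common sample complexity
`s ε δ`, then so is every subclass of cardinality strictly less than continuum. -/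
theorem small_subclasses_ugc_of_countable_ugc (hMA : MartinsAxiom)
    {Ω : Type} [MeasurableSpace Ω] [StandardBorelSpace Ω]
    (𝒞 : Set (Set Ω)) (hBorel : ∀ C ∈ 𝒞, MeasurableSet C)
    (P : Set (Measure Ω)) (hP : ∀ μ ∈ P, IsProbabilityMeasure μ)
    (s : ℝ → ℝ → ℕ)
    (hctble : ∀ 𝒞' ⊆ 𝒞, 𝒞'.Countable →
      ∀ ε : ℝ, 0 < ε → ∀ δ : ℝ, 0 < δ → GoodBound P ε δ 𝒞' (s ε δ)) :
    ∀ 𝒞' ⊆ 𝒞, Cardinal.mk ↥𝒞' < Cardinal.continuum →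
      ∀ ε : ℝ, 0 < ε → ∀ δ : ℝ, 0 < δ → GoodBound P ε δ 𝒞' (s ε δ) := by
  intro 𝒞' h𝒞' hcard ε hε δ hδ n hn μ hμ
  have := hP μ hμ
  set ν := Measure.pi fun _ : Fin n => μ
  have := cardinalInterFilter_ae_of_martinsAxiom hMA ν
  obtain ⟨u, -, hu, hlim⟩ := exists_seq_strictMono_tendsto' hε
  set A : ℕ → Set Ω → Set (Fin n → Ω) := fun k C => {σ | u k < |empMeas n σ C - (μ C).toReal|}
  have hbad (𝒟 : Set (Set Ω)) :
      {σ : Fin n → Ω | ε ≤ ⨆ C ∈ 𝒟, |empMeas n σ C - (μ C).toReal|} = ⋂ k, ⋃ C ∈ 𝒟, A k C :=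
    setOf_le_biSup_eq_iInter_iUnion (bddAbove_range_abs_empMeas_sub μ) hu hlim 𝒟
  choose D hD𝒞' hDc hDae using fun k => exists_countable_subset_ae_le_biUnion ν 𝒞' (A := A k)
    fun C hC => measurableSet_lt measurable_const
      ((measurable_empMeas (hBorel C (h𝒞' hC))).sub_const _).abs
  have hcover (k : ℕ) : ⋃ C ∈ 𝒞', A k C ≤ᵐ[ν] ⋃ C ∈ ⋃ j, D j, A k C :=
    (EventuallyLE.cardinal_bUnion hcard fun C hC => hDae k C hC).trans <| LE.le.eventuallyLE <|
      iUnion₂_subset fun _ _ => biUnion_subset_biUnion_left (subset_iUnion D k)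
  rw [hbad]
  calc _ ≤ _ := measure_mono_ae (.countable_iInter hcover)
    _ = _ := by rw [hbad]
    _ ≤ _ := hctble _ (iUnion_subset fun k => (hD𝒞' k).trans h𝒞') (countable_iUnion hDc)
      ε hε δ hδ n hn μ hμ
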